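/- (Decoupling decomposition near the origin.) Let R > 0, let (R_k) be a sequence of positive reals with R_k → ∞, let ε > 0, and let (f_k) be a sequence in H¹_rad(H³) with sup_k ‖f_k‖_{H¹} < ∞. Then there exist a strictly increasing map k : ℕ → ℕ, functions g_n, h_n, r_n ∈ H¹_rad(H³), and a sequence R̃_n → ∞ such that f_{k(n)} = g_n + h_n + r_n for all n, and for all sufficiently large n: g_n(r) = f_{k(n)}(r) for all r ≥ R^{−1}; h_n(r) = f_{k(n)}(r) for all r ≤ R_{k(n)}^{−1}; g_n and h_n have disjoint supports; h_n(r) = 0 for all r ≥ R̃_n^{−1}; and ‖r_n‖_{H¹} ≤ ε. -/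

import Mathlib

/-!
Cut `f` off smoothly in the variable `log r`. Among `J` consecutive annuli
`e^{u+2ℓj} ≤ r ≤ e^{u+2ℓ(j+1)}` just outside `r = R_k⁻¹`, one carries at most a `1/J` share of
the energy `K + M`, and the transitions of the cutoffs are placed there. The cutoffs have
derivative `O(1/(ℓ r))` and `sinh r ≤ 2r` on `(0, 1]`, so they add `O(ℓ⁻²) ∫ f² dr` over the annulus
to the energy of the remainder; the one-dimensional Hardy inequality `∫_a^1 f² dr ≤ (2/π) (K + M)`
bounds this uniformly in the position of the annulus. Large `ℓ` and `J` thus make the remainder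
`ε`-small, and once `R_k` is large all the annuli fit below `min 1 R⁻¹`.
-/

open MeasureTheory Set Filter

/-- Squared L²(H³) norm of the hyperbolic gradient of a radial function
with profile `f`:  `K(f) = 4π ∫₀^∞ f'(r)² sinh(r)² dr`. -/
noncomputable def Kh (f : ℝ → ℝ) : ℝ :=
  4 * Real.pi * ∫ r in Ioi (0:ℝ), (deriv f r) ^ 2 * Real.sinh r ^ 2

/-- Squared L²(H³) norm: `M(f) = 4π ∫₀^∞ f(r)² sinh(r)² dr`. -/
noncomputable def Mh (f : ℝ → ℝ) : ℝ :=
  4 * Real.pi * ∫ r in Ioi (0:ℝ), f r ^ 2 * Real.sinh r ^ 2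

/-- Sixth power of the L⁶(H³) norm: `P(f) = 4π ∫₀^∞ f(r)⁶ sinh(r)² dr`. -/
noncomputable def Ph (f : ℝ → ℝ) : ℝ :=
  4 * Real.pi * ∫ r in Ioi (0:ℝ), f r ^ 6 * Real.sinh r ^ 2

/-- Energy `E(f) = K(f)/2 − P(f)/6`. -/
noncomputable def Eh (f : ℝ → ℝ) : ℝ := Kh f / 2 - Ph f / 6

/-- The functional `J(f) = E(f)/M(f)`. -/
noncomputable def Jh (f : ℝ → ℝ) : ℝ := Eh f / Mh f

/-- `f ∈ H¹_rad(H³)`: `f` is C¹ on `(0,∞)` and `K(f) + M(f) < ∞`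
(expressed as integrability of the two nonnegative integrands). -/
def H1rad (f : ℝ → ℝ) : Prop :=
  ContDiffOn ℝ 1 f (Ioi 0) ∧
  IntegrableOn (fun r => (deriv f r) ^ 2 * Real.sinh r ^ 2) (Ioi 0) ∧
  IntegrableOn (fun r => f r ^ 2 * Real.sinh r ^ 2) (Ioi 0)

/-- The H¹(H³) norm `(K(f) + M(f))^{1/2}`. -/
noncomputable def H1norm (f : ℝ → ℝ) : ℝ := Real.sqrt (Kh f + Mh f)

/-- The set `Ω`. -/
def OmegaSet : Set (ℝ → ℝ) :=
  {f | H1rad f ∧ (∃ r > 0, f r ≠ 0) ∧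
    Eh f < Real.sqrt 3 * Real.pi ^ 2 / 4 ∧
    Kh f < 3 * Real.sqrt 3 * Real.pi ^ 2 / 4}

open Real Topology

theorem sinh_le_two_mul {x : ℝ} (h0 : 0 ≤ x) (h1 : x ≤ 1) : sinh x ≤ 2 * x := by
  have hp := abs_le.mp (abs_exp_sub_one_le (x := x) (by rwa [abs_of_nonneg h0]))
  have hn := abs_le.mp (abs_exp_sub_one_le (x := -x) (by rwa [abs_neg, abs_of_nonneg h0]))
  rw [abs_of_nonneg h0] at hp
  rw [abs_neg, abs_of_nonneg h0] at hn
  rw [sinh_eq]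
  linarith [hp.2, hn.1]

theorem exists_intervalIntegral_le_div {w : ℝ → ℝ} {a : ℕ → ℝ} {J : ℕ} (hJ : 0 < J)
    (hw : ∀ k < J, IntervalIntegrable w volume (a k) (a (k + 1))) :
    ∃ k < J, ∫ x in a k..a (k + 1), w x ≤ (∫ x in a 0..a J, w x) / J := by
  have hsum : ∑ k ∈ Finset.range J, ∫ x in a k..a (k + 1), w x
      = ∑ _k ∈ Finset.range J, (∫ x in a 0..a J, w x) / J := by
    rw [intervalIntegral.sum_integral_adjacent_intervals hw, Finset.sum_const, Finset.card_range,
      nsmul_eq_mul, mul_div_cancel₀ _ (by exact_mod_cast hJ.ne')]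
  obtain ⟨k, hk, hle⟩ :=
    Finset.exists_le_of_sum_le (Finset.nonempty_range_iff.mpr hJ.ne') hsum.le
  exact ⟨k, Finset.mem_range.mp hk, hle⟩

theorem exists_abs_deriv_smoothTransition_le : ∃ B, ∀ t, |deriv smoothTransition t| ≤ B := by
  have hsupp : HasCompactSupport (deriv smoothTransition) := by
    refine HasCompactSupport.intro (isCompact_Icc (a := (0 : ℝ)) (b := 1)) fun t ht => ?_
    rcases not_and_or.mp ht with h | h
    · have : smoothTransition =ᶠ[𝓝 t] fun _ => 0 := by
        filter_upwards [Iio_mem_nhds (not_le.mp h)] with s hs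
        exact smoothTransition.zero_of_nonpos hs.le
      simp [this.deriv_eq]
    · have : smoothTransition =ᶠ[𝓝 t] fun _ => 1 := by
        filter_upwards [Ioi_mem_nhds (not_le.mp h)] with s hs
        exact smoothTransition.one_of_one_le hs.le
      simp [this.deriv_eq]
  exact (smoothTransition.contDiff.continuous_deriv le_rfl).bounded_above_of_compact_support hsupp

noncomputable def logCutoff (ℓ u x : ℝ) : ℝ :=
  if 0 < x then smoothTransition ((log x - u) / ℓ) else 0

section logCutoff

variable {ℓ u v x B : ℝ}

theorem logCutoff_mem_Icc : logCutoff ℓ u x ∈ Icc 0 1 := by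
  unfold logCutoff
  split_ifs
  exacts [⟨smoothTransition.nonneg _, smoothTransition.le_one _⟩, ⟨le_rfl, zero_le_one⟩]

theorem abs_logCutoff_le_one : |logCutoff ℓ u x| ≤ 1 := by
  rw [abs_of_nonneg logCutoff_mem_Icc.1]
  exact logCutoff_mem_Icc.2

theorem abs_logCutoff_sub_le_one : |(logCutoff ℓ u - logCutoff ℓ v) x| ≤ 1 := by
  have hu := logCutoff_mem_Icc (ℓ := ℓ) (u := u) (x := x)
  have hv := logCutoff_mem_Icc (ℓ := ℓ) (u := v) (x := x)
  rw [Pi.sub_apply, abs_sub_le_iff]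
  constructor <;> linarith [hu.1, hu.2, hv.1, hv.2]

theorem logCutoff_eq_zero (hℓ : 0 ≤ ℓ) (hx : x ≤ exp u) : logCutoff ℓ u x = 0 := by
  unfold logCutoff
  split_ifs with hx0
  · refine smoothTransition.zero_of_nonpos (div_nonpos_of_nonpos_of_nonneg ?_ hℓ)
    linarith [(log_le_iff_le_exp hx0).mpr hx]
  · rfl

theorem logCutoff_eq_one (hℓ : 0 < ℓ) (hx : exp (u + ℓ) ≤ x) : logCutoff ℓ u x = 1 := by
  have hx0 : 0 < x := (exp_pos _).trans_le hx
  rw [logCutoff, if_pos hx0]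
  refine smoothTransition.one_of_one_le ((le_div_iff₀ hℓ).mpr ?_)
  linarith [(le_log_iff_exp_le hx0).mpr hx]

theorem logCutoff_eventuallyEq_zero (hℓ : 0 ≤ ℓ) (hx : x < exp u) :
    logCutoff ℓ u =ᶠ[𝓝 x] 0 := by
  filter_upwards [Iio_mem_nhds hx] with y hy using logCutoff_eq_zero hℓ hy.le

theorem logCutoff_eventuallyEq_one (hℓ : 0 < ℓ) (hx : exp (u + ℓ) < x) :
    logCutoff ℓ u =ᶠ[𝓝 x] 1 := by
  filter_upwards [Ioi_mem_nhds hx] with y hy using logCutoff_eq_one hℓ hy.le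

theorem logCutoff_sub_eventuallyEq_zero (hℓ : 0 < ℓ) (hx : x ∉ Icc (exp u) (exp (u + 2 * ℓ))) :
    logCutoff ℓ u - logCutoff ℓ (u + ℓ) =ᶠ[𝓝 x] 0 := by
  rcases not_and_or.mp hx with hx | hx
  · have hx' : x < exp (u + ℓ) := (not_le.mp hx).trans_le (exp_le_exp.mpr (by linarith))
    filter_upwards [logCutoff_eventuallyEq_zero hℓ.le (not_le.mp hx),
      logCutoff_eventuallyEq_zero hℓ.le hx'] with y h₁ h₂
    simp [h₁, h₂]
  · have hx' : exp (u + ℓ + ℓ) < x := by rw [add_assoc, ← two_mul]; exact not_le.mp hx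
    filter_upwards [logCutoff_eventuallyEq_one hℓ ((exp_le_exp.mpr (by linarith)).trans_lt hx'),
      logCutoff_eventuallyEq_one hℓ hx'] with y h₁ h₂
    simp [h₁, h₂]

theorem logCutoff_eqOn_Ioi :
    EqOn (logCutoff ℓ u) (fun x => smoothTransition ((log x - u) / ℓ)) (Ioi 0) :=
  fun _ hx => if_pos hx

theorem hasDerivAt_logCutoff (hx : 0 < x) :
    HasDerivAt (logCutoff ℓ u) (deriv smoothTransition ((log x - u) / ℓ) * (x⁻¹ / ℓ)) x := by
  have hlog : HasDerivAt (fun y => (log y - u) / ℓ) (x⁻¹ / ℓ) x :=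
    ((hasDerivAt_log hx.ne').sub_const u).div_const ℓ
  refine ((smoothTransition.contDiff.differentiable one_ne_zero _).hasDerivAt.comp x hlog)
    |>.congr_of_eventuallyEq ?_
  filter_upwards [Ioi_mem_nhds hx] with y hy using logCutoff_eqOn_Ioi hy

theorem contDiffOn_logCutoff : ContDiffOn ℝ 1 (logCutoff ℓ u) (Ioi 0) :=
  (smoothTransition.contDiff.comp_contDiffOn (((contDiffOn_log.mono fun _ hy =>
    (mem_Ioi.mp hy).ne').sub contDiffOn_const).div_const ℓ)).congr logCutoff_eqOn_Ioi

theorem abs_deriv_logCutoff_le (hB : ∀ t, |deriv smoothTransition t| ≤ B) (hℓ : 0 < ℓ)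
    (hx : 0 < x) : |deriv (logCutoff ℓ u) x| ≤ B / (ℓ * x) := by
  rw [(hasDerivAt_logCutoff hx).deriv, abs_mul, abs_of_pos (by positivity : 0 < x⁻¹ / ℓ)]
  calc |deriv smoothTransition ((log x - u) / ℓ)| * (x⁻¹ / ℓ) ≤ B * (x⁻¹ / ℓ) := by
        gcongr; exact hB _
    _ = B / (ℓ * x) := by field_simp

theorem abs_deriv_logCutoff_le_div_exp (hB : ∀ t, |deriv smoothTransition t| ≤ B) (hℓ : 0 < ℓ)
    (hx : 0 < x) : |deriv (logCutoff ℓ u) x| ≤ B / (ℓ * exp u) := by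
  have hB0 : 0 ≤ B := (abs_nonneg _).trans (hB 0)
  rcases lt_or_ge x (exp u) with hxu | hxu
  · rw [(logCutoff_eventuallyEq_zero hℓ.le hxu).deriv_eq]
    simpa using by positivity
  · exact (abs_deriv_logCutoff_le hB hℓ hx).trans (by gcongr)

theorem abs_deriv_logCutoff_sub_le (hB : ∀ t, |deriv smoothTransition t| ≤ B) (hℓ : 0 < ℓ)
    (hx : 0 < x) : |deriv (logCutoff ℓ u - logCutoff ℓ v) x| ≤ 2 * B / ℓ / x := by
  rw [deriv_sub (hasDerivAt_logCutoff hx).differentiableAt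
    (hasDerivAt_logCutoff hx).differentiableAt]
  calc |deriv (logCutoff ℓ u) x - deriv (logCutoff ℓ v) x|
      ≤ |deriv (logCutoff ℓ u) x| + |deriv (logCutoff ℓ v) x| := abs_sub _ _
    _ ≤ B / (ℓ * x) + B / (ℓ * x) :=
        add_le_add (abs_deriv_logCutoff_le hB hℓ hx) (abs_deriv_logCutoff_le hB hℓ hx)
    _ = 2 * B / ℓ / x := by field_simp; ring

end logCutoff

section H1rad

variable {F G q : ℝ → ℝ} {x : ℝ}

theorem differentiableAt_of_contDiffOn_Ioi (hF : ContDiffOn ℝ 1 F (Ioi 0)) (hx : 0 < x) :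
    DifferentiableAt ℝ F x :=
  (hF.differentiableOn one_ne_zero).differentiableAt (Ioi_mem_nhds hx)

theorem deriv_mul_of_pos (hF : ContDiffOn ℝ 1 F (Ioi 0)) (hq : ContDiffOn ℝ 1 q (Ioi 0))
    (hx : 0 < x) : deriv (q * F) x = deriv q x * F x + q x * deriv F x :=
  deriv_mul (differentiableAt_of_contDiffOn_Ioi hq hx) (differentiableAt_of_contDiffOn_Ioi hF hx)

theorem integrableOn_sq_mul_sinh_sq {u v : ℝ → ℝ} (hu : ContinuousOn u (Ioi 0))
    (hv : IntegrableOn v (Ioi 0)) (huv : ∀ x > 0, u x ^ 2 * sinh x ^ 2 ≤ v x) :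
    IntegrableOn (fun x => u x ^ 2 * sinh x ^ 2) (Ioi 0) := by
  refine hv.mono' ((hu.pow 2).mul (continuous_sinh.continuousOn.pow 2)
    |>.aestronglyMeasurable measurableSet_Ioi) ?_
  filter_upwards [ae_restrict_mem measurableSet_Ioi] with x hx
  rw [Real.norm_of_nonneg (by positivity)]
  exact huv x hx

theorem H1rad.mul {A M : ℝ} (hF : H1rad F) (hq : ContDiffOn ℝ 1 q (Ioi 0))
    (hqA : ∀ x > 0, |q x| ≤ A) (hqM : ∀ x > 0, |deriv q x| ≤ M) : H1rad (q * F) := by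
  obtain ⟨hFc, hFK, hFM⟩ := hF
  have hqF : ContDiffOn ℝ 1 (q * F) (Ioi 0) := hq.mul hFc
  have hq2 : ∀ x > 0, q x ^ 2 ≤ A ^ 2 := fun x hx =>
    sq_le_sq.mpr ((hqA x hx).trans (le_abs_self A))
  refine ⟨hqF, ?_, ?_⟩
  · refine integrableOn_sq_mul_sinh_sq (hqF.continuousOn_deriv_of_isOpen isOpen_Ioi le_rfl)
      ((hFM.const_mul (2 * M ^ 2)).add (hFK.const_mul (2 * A ^ 2))) fun x hx => ?_
    have hq'2 : deriv q x ^ 2 ≤ M ^ 2 := sq_le_sq.mpr ((hqM x hx).trans (le_abs_self M))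
    have := hq2 x hx
    calc deriv (q * F) x ^ 2 * sinh x ^ 2
        ≤ 2 * ((deriv q x * F x) ^ 2 + (q x * deriv F x) ^ 2) * sinh x ^ 2 := by
          rw [deriv_mul_of_pos hFc hq hx]; gcongr; exact add_sq_le
      _ = 2 * (deriv q x ^ 2 * F x ^ 2 + q x ^ 2 * deriv F x ^ 2) * sinh x ^ 2 := by ring
      _ ≤ 2 * (M ^ 2 * F x ^ 2 + A ^ 2 * deriv F x ^ 2) * sinh x ^ 2 := by gcongr
      _ = 2 * M ^ 2 * (F x ^ 2 * sinh x ^ 2) + 2 * A ^ 2 * (deriv F x ^ 2 * sinh x ^ 2) := by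
          ring
  · refine integrableOn_sq_mul_sinh_sq hqF.continuousOn (hFM.const_mul (A ^ 2)) fun x hx => ?_
    have := hq2 x hx
    calc (q * F) x ^ 2 * sinh x ^ 2 = q x ^ 2 * (F x ^ 2 * sinh x ^ 2) := by
          rw [Pi.mul_apply]; ring
      _ ≤ A ^ 2 * (F x ^ 2 * sinh x ^ 2) := by gcongr

theorem H1rad.sub (hF : H1rad F) (hG : H1rad G) : H1rad (F - G) := by
  obtain ⟨hFc, hFK, hFM⟩ := hF
  obtain ⟨hGc, hGK, hGM⟩ := hG
  refine ⟨hFc.sub hGc, ?_, ?_⟩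
  · refine integrableOn_sq_mul_sinh_sq
      ((hFc.sub hGc).continuousOn_deriv_of_isOpen isOpen_Ioi le_rfl)
      ((hFK.add hGK).const_mul 2) fun x hx => ?_
    rw [deriv_sub (differentiableAt_of_contDiffOn_Ioi hFc hx)
      (differentiableAt_of_contDiffOn_Ioi hGc hx)]
    calc (deriv F x - deriv G x) ^ 2 * sinh x ^ 2
        ≤ 2 * (deriv F x ^ 2 + deriv G x ^ 2) * sinh x ^ 2 := by
          gcongr; simpa [sub_eq_add_neg] using add_sq_le (a := deriv F x) (b := -deriv G x)
      _ = _ := by rw [Pi.add_apply]; ring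
  · refine integrableOn_sq_mul_sinh_sq (hFc.sub hGc).continuousOn
      ((hFM.add hGM).const_mul 2) fun x hx => ?_
    calc (F - G) x ^ 2 * sinh x ^ 2 ≤ 2 * (F x ^ 2 + G x ^ 2) * sinh x ^ 2 := by
          gcongr; simpa [sub_eq_add_neg] using add_sq_le (a := F x) (b := -G x)
      _ = _ := by rw [Pi.add_apply]; ring

theorem H1rad.logCutoff_mul {ℓ u : ℝ} (hF : H1rad F) (hℓ : 0 < ℓ) :
    H1rad (logCutoff ℓ u * F) := by
  obtain ⟨B, hB⟩ := exists_abs_deriv_smoothTransition_le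
  exact hF.mul contDiffOn_logCutoff (fun _ _ => abs_logCutoff_le_one)
    fun _ hx => abs_deriv_logCutoff_le_div_exp hB hℓ hx

end H1rad

noncomputable def energyDensity (F : ℝ → ℝ) (x : ℝ) : ℝ :=
  (deriv F x ^ 2 + F x ^ 2) * sinh x ^ 2

section energyDensity

variable {F q : ℝ → ℝ} {a b D x : ℝ}

theorem energyDensity_nonneg : 0 ≤ energyDensity F x := by
  unfold energyDensity; positivity

theorem continuousOn_energyDensity (hF : ContDiffOn ℝ 1 F (Ioi 0)) :
    ContinuousOn (energyDensity F) (Ioi 0) := by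
  have := hF.continuousOn_deriv_of_isOpen isOpen_Ioi le_rfl
  have := hF.continuousOn
  unfold energyDensity; fun_prop

theorem H1rad.integrableOn_energyDensity (hF : H1rad F) :
    IntegrableOn (energyDensity F) (Ioi 0) :=
  (hF.2.1.add hF.2.2).congr_fun (fun x _ => by rw [Pi.add_apply, energyDensity]; ring)
    measurableSet_Ioi

theorem H1rad.Kh_add_Mh (hF : H1rad F) :
    Kh F + Mh F = 4 * π * ∫ x in Ioi 0, energyDensity F x := by
  rw [Kh, Mh, ← mul_add, ← integral_add hF.2.1 hF.2.2]
  simp only [energyDensity, add_mul]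

theorem H1rad.intervalIntegral_energyDensity_le (hF : H1rad F) (ha : 0 ≤ a) (hab : a ≤ b) :
    ∫ x in a..b, energyDensity F x ≤ ∫ x in Ioi 0, energyDensity F x := by
  rw [intervalIntegral.integral_of_le hab]
  exact setIntegral_mono_set hF.integrableOn_energyDensity
    (ae_of_all _ fun _ => energyDensity_nonneg)
    (Ioc_subset_Ioi_self.trans (Ioi_subset_Ioi ha)).eventuallyLE

theorem sq_le_hardy_integrand (x y z : ℝ) :
    y ^ 2 ≤ 2 * ((1 - 2 * x) * y ^ 2 + (x - x ^ 2) * (2 * y * z))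
      + 8 * x ^ 2 * (z ^ 2 + y ^ 2) := by
  nlinarith [sq_nonneg ((1 - 2 * x) * y + 2 * x * z), sq_nonneg (x * (2 * y + z)),
    sq_nonneg (x * z)]

theorem H1rad.intervalIntegral_sq_le (hF : H1rad F) (ha : 0 < a) (ha1 : a ≤ 1) :
    ∫ x in a..1, F x ^ 2 ≤ 8 * ∫ x in Ioi 0, energyDensity F x := by
  have hsub : uIcc a 1 ⊆ Ioi 0 := by
    rw [uIcc_of_le ha1]; exact fun x hx => ha.trans_le hx.1
  have hFc : ContinuousOn F (uIcc a 1) := hF.1.continuousOn.mono hsub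
  have hF'c : ContinuousOn (deriv F) (uIcc a 1) :=
    (hF.1.continuousOn_deriv_of_isOpen isOpen_Ioi le_rfl).mono hsub
  have heF : ContinuousOn (energyDensity F) (uIcc a 1) :=
    (continuousOn_energyDensity hF.1).mono hsub
  set v' : ℝ → ℝ := fun x => (1 - 2 * x) * F x ^ 2 + (x - x ^ 2) * (2 * F x * deriv F x)
  have hv'c : ContinuousOn v' (uIcc a 1) := by fun_prop
  -- `v'` is the derivative of `(x - x²) F²`, which vanishes at `1` and is nonnegative at `a`
  have hv' : ∫ x in a..1, v' x ≤ 0 := by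
    rw [intervalIntegral.integral_eq_sub_of_hasDerivAt (f := fun x => (x - x ^ 2) * F x ^ 2)
      (fun x hx => by
        have hF' := (differentiableAt_of_contDiffOn_Ioi hF.1 (hsub hx)).hasDerivAt
        refine (((hasDerivAt_id' x).sub (hasDerivAt_pow 2 x)).mul (hF'.pow 2)).congr_deriv ?_
        simp only [v']; norm_num)
      hv'c.intervalIntegrable]
    have : 0 ≤ (a - a ^ 2) * F a ^ 2 := mul_nonneg (by nlinarith) (sq_nonneg _)
    norm_num
    linarith
  calc ∫ x in a..1, F x ^ 2 ≤ ∫ x in a..1, (2 * v' x + 8 * energyDensity F x) := by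
        refine intervalIntegral.integral_mono_on ha1 (hFc.pow 2).intervalIntegrable
          ((continuousOn_const.mul hv'c).add (continuousOn_const.mul heF)).intervalIntegrable
          fun x hx => ?_
        have h0 : 0 ≤ x := ha.le.trans hx.1
        have hsinh : x ^ 2 ≤ sinh x ^ 2 := pow_le_pow_left₀ h0 (self_le_sinh_iff.mpr h0) 2
        have := mul_le_mul_of_nonneg_right hsinh
          (add_nonneg (sq_nonneg (deriv F x)) (sq_nonneg (F x)))
        have := sq_le_hardy_integrand x (F x) (deriv F x)
        simp only [v', energyDensity]
        linarith
    _ = 2 * (∫ x in a..1, v' x) + 8 * ∫ x in a..1, energyDensity F x := by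
        rw [intervalIntegral.integral_add (f := fun x => 2 * v' x)
          (g := fun x => 8 * energyDensity F x)
          (continuousOn_const.mul hv'c).intervalIntegrable
          (continuousOn_const.mul heF).intervalIntegrable, intervalIntegral.integral_const_mul,
          intervalIntegral.integral_const_mul]
    _ ≤ 8 * ∫ x in Ioi 0, energyDensity F x := by
        linarith [hF.intervalIntegral_energyDensity_le ha.le ha1]

theorem energyDensity_mul_le (hF : ContDiffOn ℝ 1 F (Ioi 0)) (hq : ContDiffOn ℝ 1 q (Ioi 0))
    (hx0 : 0 < x) (hx1 : x ≤ 1) (hq1 : |q x| ≤ 1) (hqD : |deriv q x| ≤ D / x) :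
    energyDensity (q * F) x ≤ 8 * D ^ 2 * F x ^ 2 + 2 * energyDensity F x := by
  have hsinh : sinh x ^ 2 ≤ (2 * x) ^ 2 :=
    pow_le_pow_left₀ (sinh_nonneg_iff.mpr hx0.le) (sinh_le_two_mul hx0.le hx1) 2
  have hq' : deriv q x ^ 2 * sinh x ^ 2 ≤ 4 * D ^ 2 :=
    calc deriv q x ^ 2 * sinh x ^ 2 ≤ (D / x) ^ 2 * (2 * x) ^ 2 :=
          mul_le_mul (sq_le_sq.mpr (hqD.trans (le_abs_self _))) hsinh (by positivity)
            (by positivity)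
      _ = 4 * D ^ 2 := by field_simp; ring
  have hq2 : q x ^ 2 ≤ 1 := by simpa using sq_le_sq.mpr (hq1.trans (le_abs_self 1))
  rw [energyDensity, energyDensity, deriv_mul_of_pos hF hq hx0, Pi.mul_apply]
  calc ((deriv q x * F x + q x * deriv F x) ^ 2 + (q x * F x) ^ 2) * sinh x ^ 2
      ≤ (2 * ((deriv q x * F x) ^ 2 + (q x * deriv F x) ^ 2) + (q x * F x) ^ 2)
          * sinh x ^ 2 := by
        gcongr; exact add_sq_le
    _ = 2 * F x ^ 2 * (deriv q x ^ 2 * sinh x ^ 2)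
        + q x ^ 2 * ((2 * deriv F x ^ 2 + F x ^ 2) * sinh x ^ 2) := by ring
    _ ≤ 2 * F x ^ 2 * (4 * D ^ 2) + 1 * ((2 * deriv F x ^ 2 + F x ^ 2) * sinh x ^ 2) := by
        gcongr
    _ ≤ 8 * D ^ 2 * F x ^ 2 + 2 * ((deriv F x ^ 2 + F x ^ 2) * sinh x ^ 2) := by
        nlinarith [sq_nonneg (F x * sinh x)]

theorem integral_energyDensity_mul_le (hF : ContDiffOn ℝ 1 F (Ioi 0))
    (hq : ContDiffOn ℝ 1 q (Ioi 0)) (ha : 0 < a) (hab : a ≤ b) (hb : b ≤ 1)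
    (hq1 : ∀ x ∈ Icc a b, |q x| ≤ 1) (hqD : ∀ x ∈ Icc a b, |deriv q x| ≤ D / x)
    (hsupp : ∀ x > 0, x ∉ Icc a b → q =ᶠ[𝓝 x] 0) :
    ∫ x in Ioi 0, energyDensity (q * F) x
      ≤ 8 * D ^ 2 * (∫ x in a..b, F x ^ 2) + 2 * ∫ x in a..b, energyDensity F x := by
  have hsub : Icc a b ⊆ Ioi 0 := fun x hx => ha.trans_le hx.1
  have hsub' : uIcc a b ⊆ Ioi 0 := by rwa [uIcc_of_le hab]
  have heF := (continuousOn_energyDensity hF).mono hsub'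
  have hF2 := (hF.continuousOn.mono hsub').pow 2
  rw [setIntegral_eq_of_subset_of_forall_sdiff_eq_zero measurableSet_Ioi hsub,
    integral_Icc_eq_integral_Ioc, ← intervalIntegral.integral_of_le hab,
    ← intervalIntegral.integral_const_mul, ← intervalIntegral.integral_const_mul,
    ← intervalIntegral.integral_add (f := fun x => 8 * D ^ 2 * F x ^ 2)
      (g := fun x => 2 * energyDensity F x) (continuousOn_const.mul hF2).intervalIntegrable
      (continuousOn_const.mul heF).intervalIntegrable]
  · exact intervalIntegral.integral_mono_on hab
      ((continuousOn_energyDensity (hq.mul hF)).mono hsub').intervalIntegrable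
      ((continuousOn_const.mul hF2).add (continuousOn_const.mul heF)).intervalIntegrable
      fun x hx => energyDensity_mul_le hF hq (hsub hx) (hx.2.trans hb) (hq1 x hx) (hqD x hx)
  · rintro x ⟨hx0, hx⟩
    have hqF : q * F =ᶠ[𝓝 x] 0 := by
      filter_upwards [hsupp x hx0 hx] with y hy
      simp [hy]
    simp [energyDensity, hqF.deriv_eq, hqF.eq_of_nhds]

theorem H1rad.Kh_add_Mh_mul_le (hF : H1rad F) (hqF : H1rad (q * F))
    (hq : ContDiffOn ℝ 1 q (Ioi 0)) (ha : 0 < a) (hab : a ≤ b) (hb : b ≤ 1)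
    (hq1 : ∀ x ∈ Icc a b, |q x| ≤ 1) (hqD : ∀ x ∈ Icc a b, |deriv q x| ≤ D / x)
    (hsupp : ∀ x > 0, x ∉ Icc a b → q =ᶠ[𝓝 x] 0) :
    Kh (q * F) + Mh (q * F)
      ≤ 64 * D ^ 2 * (Kh F + Mh F) + 8 * π * ∫ x in a..b, energyDensity F x := by
  have hHardy : ∫ x in a..b, F x ^ 2 ≤ 8 * ∫ x in Ioi 0, energyDensity F x := by
    refine (intervalIntegral.integral_mono_interval le_rfl hab hb
      (ae_of_all _ fun x => sq_nonneg (F x)) ?_).trans (hF.intervalIntegral_sq_le ha (hab.trans hb))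
    refine (hF.1.continuousOn.mono ?_).pow 2 |>.intervalIntegrable
    rw [uIcc_of_le (hab.trans hb)]
    exact fun x hx => ha.trans_le hx.1
  have hband := integral_energyDensity_mul_le hF.1 hq ha hab hb hq1 hqD hsupp
  rw [hqF.Kh_add_Mh, hF.Kh_add_Mh]
  calc 4 * π * ∫ x in Ioi 0, energyDensity (q * F) x
      ≤ 4 * π * (8 * D ^ 2 * (8 * ∫ x in Ioi 0, energyDensity F x)
          + 2 * ∫ x in a..b, energyDensity F x) := by
        gcongr
        exact hband.trans (by gcongr)
    _ = _ := by ring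

end energyDensity

structure IsSplitting (F g h rr : ℝ → ℝ) (r₀ r₁ : ℝ) : Prop where
  h1rad_g : H1rad g
  h1rad_h : H1rad h
  h1rad_rr : H1rad rr
  eq_add_add : ∀ x, F x = g x + h x + rr x
  g_eq_of_le : ∀ x, r₁ ≤ x → g x = F x
  h_eq_of_le : ∀ x, x ≤ r₀ → h x = F x
  disjoint : ∀ x, g x = 0 ∨ h x = 0
  h_eq_zero_of_le : ∀ x, r₁ ≤ x → h x = 0

theorem IsSplitting.mono {F g h rr : ℝ → ℝ} {r₀ r₁ s₀ s₁ : ℝ} (hs : IsSplitting F g h rr r₀ r₁)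
    (h₀ : s₀ ≤ r₀) (h₁ : r₁ ≤ s₁) : IsSplitting F g h rr s₀ s₁ where
  h1rad_g := hs.h1rad_g
  h1rad_h := hs.h1rad_h
  h1rad_rr := hs.h1rad_rr
  eq_add_add := hs.eq_add_add
  g_eq_of_le x hx := hs.g_eq_of_le x (h₁.trans hx)
  h_eq_of_le x hx := hs.h_eq_of_le x (hx.trans h₀)
  disjoint := hs.disjoint
  h_eq_zero_of_le x hx := hs.h_eq_zero_of_le x (h₁.trans hx)

section splitting

variable {F : ℝ → ℝ} {ℓ B : ℝ}

theorem H1rad.exists_splitting_of_band (hF : H1rad F) (hB : ∀ t, |deriv smoothTransition t| ≤ B)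
    (hℓ : 0 < ℓ) {p : ℝ} (hp : p + 2 * ℓ ≤ 0) :
    ∃ g h rr, IsSplitting F g h rr (exp p) (exp (p + 2 * ℓ)) ∧
      Kh rr + Mh rr ≤ 256 * B ^ 2 / ℓ ^ 2 * (Kh F + Mh F)
        + 8 * π * ∫ x in exp p..exp (p + 2 * ℓ), energyDensity F x := by
  have hrr : H1rad ((logCutoff ℓ p - logCutoff ℓ (p + ℓ)) * F) := by
    rw [sub_mul]; exact (hF.logCutoff_mul hℓ).sub (hF.logCutoff_mul hℓ)
  refine ⟨logCutoff ℓ (p + ℓ) * F, F - logCutoff ℓ p * F,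
    (logCutoff ℓ p - logCutoff ℓ (p + ℓ)) * F, ⟨hF.logCutoff_mul hℓ,
      hF.sub (hF.logCutoff_mul hℓ), hrr, fun x => ?_, fun x hx => ?_, fun x hx => ?_,
      fun x => ?_, fun x hx => ?_⟩, ?_⟩
  · simp only [Pi.mul_apply, Pi.sub_apply]; ring
  · rw [two_mul, ← add_assoc] at hx
    simp [logCutoff_eq_one hℓ hx]
  · simp [logCutoff_eq_zero hℓ.le hx]
  · rcases le_total x (exp (p + ℓ)) with hx | hx
    · simp [logCutoff_eq_zero hℓ.le hx]
    · simp [logCutoff_eq_one hℓ hx]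
  · simp [logCutoff_eq_one (u := p) hℓ ((exp_le_exp.mpr (by linarith)).trans hx)]
  · calc Kh _ + Mh _ ≤ 64 * (2 * B / ℓ) ^ 2 * (Kh F + Mh F)
          + 8 * π * ∫ x in exp p..exp (p + 2 * ℓ), energyDensity F x :=
          hF.Kh_add_Mh_mul_le hrr (contDiffOn_logCutoff.sub contDiffOn_logCutoff) (exp_pos p)
            (exp_le_exp.mpr (by linarith)) (exp_le_one_iff.mpr hp)
            (fun _ _ => abs_logCutoff_sub_le_one)
            (fun x hx => abs_deriv_logCutoff_sub_le hB hℓ ((exp_pos p).trans_le hx.1))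
            fun _ _ hx => logCutoff_sub_eventuallyEq_zero hℓ hx
      _ = _ := by ring

theorem H1rad.exists_splitting (hF : H1rad F) (hB : ∀ t, |deriv smoothTransition t| ≤ B)
    (hℓ : 0 < ℓ) {J : ℕ} (hJ : 0 < J) {u : ℝ} (hu : u + 2 * ℓ * J ≤ 0) :
    ∃ g h rr, IsSplitting F g h rr (exp u) (exp (u + 2 * ℓ * J)) ∧
      Kh rr + Mh rr ≤ (256 * B ^ 2 / ℓ ^ 2 + 2 / J) * (Kh F + Mh F) := by
  set a : ℕ → ℝ := fun k => exp (u + 2 * ℓ * k)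
  have hint : ∀ k < J, IntervalIntegrable (energyDensity F) volume (a k) (a (k + 1)) :=
    fun k _ => ((continuousOn_energyDensity hF.1).mono fun x hx =>
      (lt_min (exp_pos _) (exp_pos _)).trans_le hx.1).intervalIntegrable
  obtain ⟨k, hkJ, hk⟩ := exists_intervalIntegral_le_div hJ hint
  have hkJ' : (k : ℝ) + 1 ≤ J := by exact_mod_cast hkJ
  obtain ⟨g, h, rr, hs, hrr⟩ :=
    hF.exists_splitting_of_band hB hℓ (p := u + 2 * ℓ * k) (by nlinarith)
  refine ⟨g, h, rr, hs.mono (exp_le_exp.mpr (le_add_of_nonneg_right (by positivity)))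
    (exp_le_exp.mpr (by nlinarith)), ?_⟩
  have hak : exp (u + 2 * ℓ * k + 2 * ℓ) = a (k + 1) := by
    simp only [a]; push_cast; ring_nf
  have hband : ∫ x in a k..a (k + 1), energyDensity F x
      ≤ (∫ x in Ioi 0, energyDensity F x) / J := by
    refine hk.trans (div_le_div_of_nonneg_right ?_ (Nat.cast_nonneg J))
    refine hF.intervalIntegral_energyDensity_le (exp_pos _).le (exp_le_exp.mpr ?_)
    simp only [Nat.cast_zero, mul_zero, add_zero]
    exact le_add_of_nonneg_right (by positivity)
  rw [hak] at hrr
  calc Kh rr + Mh rr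
      ≤ 256 * B ^ 2 / ℓ ^ 2 * (Kh F + Mh F)
          + 8 * π * ((∫ x in Ioi 0, energyDensity F x) / J) := by
        have := mul_le_mul_of_nonneg_left hband (by positivity : (0 : ℝ) ≤ 8 * π)
        linarith
    _ = (256 * B ^ 2 / ℓ ^ 2 + 2 / J) * (Kh F + Mh F) := by rw [hF.Kh_add_Mh]; ring

end splitting

theorem exists_nat_splitting_cost_le (B E : ℝ) {ε : ℝ} (hε : 0 < ε) :
    ∃ N : ℕ, 0 < N ∧ (256 * B ^ 2 / (N : ℝ) ^ 2 + 2 / N) * E ≤ ε ^ 2 := by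
  have hN : Tendsto (fun N : ℕ => (256 * B ^ 2 / (N : ℝ) ^ 2 + 2 / N) * E) atTop (𝓝 0) := by
    have h1 := tendsto_const_nhds (x := 256 * B ^ 2) (f := (atTop : Filter ℕ)) |>.div_atTop
      ((tendsto_pow_atTop two_ne_zero).comp tendsto_natCast_atTop_atTop)
    simpa using (h1.add (tendsto_const_div_atTop_nhds_zero_nat 2)).mul_const E
  exact ((hN.eventually (ge_mem_nhds (by positivity))).and (eventually_gt_atTop 0)).exists.imp
    fun N hN => ⟨hN.2, hN.1⟩

theorem decoupling_decomposition_near_general (R : ℝ) (hR : 0 < R)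
    (Rk : ℕ → ℝ) (hRk : Tendsto Rk atTop atTop)
    (ε : ℝ) (hε : 0 < ε)
    (f : ℕ → ℝ → ℝ) (hf : ∀ k, H1rad (f k))
    (hbdd : ∃ C : ℝ, ∀ k, H1norm (f k) ≤ C) :
    ∃ k : ℕ → ℕ, StrictMono k ∧
    ∃ g h rr : ℕ → ℝ → ℝ, ∃ Rt : ℕ → ℝ,
      Tendsto Rt atTop atTop ∧
      (∀ n, H1rad (g n) ∧ H1rad (h n) ∧ H1rad (rr n)) ∧
      (∀ n, ∀ x, f (k n) x = g n x + h n x + rr n x) ∧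
      (∀ᶠ n in atTop,
        (∀ x : ℝ, R⁻¹ ≤ x → g n x = f (k n) x) ∧
        (∀ x : ℝ, 0 < x → x ≤ (Rk (k n))⁻¹ → h n x = f (k n) x) ∧
        (∀ x : ℝ, g n x = 0 ∨ h n x = 0) ∧
        (∀ x : ℝ, (Rt n)⁻¹ ≤ x → h n x = 0) ∧
        H1norm (rr n) ≤ ε) := by
  obtain ⟨C, hC⟩ := hbdd
  obtain ⟨B, hB⟩ := exists_abs_deriv_smoothTransition_le
  obtain ⟨N, hN, hsmall⟩ := exists_nat_splitting_cost_le B (C ^ 2) hε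
  have hlog : Tendsto (fun n => log (Rk n)) atTop atTop := tendsto_log_atTop.comp hRk
  obtain ⟨n₀, hn₀⟩ := eventually_atTop.mp
    ((hlog.eventually_ge_atTop (2 * N * N + |log R|)).and (hRk.eventually_gt_atTop 0))
  -- annuli of width `2N` in `log r`, `N` of them
  have hsplit : ∀ n, ∃ g h rr, IsSplitting (f (n + n₀)) g h rr
      (exp (-log (Rk (n + n₀)))) (exp (-log (Rk (n + n₀)) + 2 * N * N)) ∧
      Kh rr + Mh rr ≤ (256 * B ^ 2 / (N : ℝ) ^ 2 + 2 / N) * (Kh (f (n + n₀)) + Mh (f (n + n₀))) :=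
    fun n => (hf _).exists_splitting hB (Nat.cast_pos.mpr hN) hN
      (by linarith [(hn₀ (n + n₀) (Nat.le_add_left _ _)).1, abs_nonneg (log R)])
  choose g h rr hs hrr using hsplit
  refine ⟨(· + n₀), add_left_strictMono, g, h, rr, fun n => exp (log (Rk (n + n₀)) - 2 * N * N),
    tendsto_exp_atTop.comp (tendsto_atTop_add_const_right _ _
      (hlog.comp (tendsto_add_atTop_nat n₀))),
    fun n => ⟨(hs n).h1rad_g, (hs n).h1rad_h, (hs n).h1rad_rr⟩, fun n => (hs n).eq_add_add,
    Eventually.of_forall fun n => ?_⟩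
  obtain ⟨hρlog, hρ⟩ := hn₀ (n + n₀) (Nat.le_add_left _ _)
  have hR' : exp (-log (Rk (n + n₀)) + 2 * N * N) ≤ R⁻¹ := by
    rw [← exp_log (inv_pos.mpr hR), log_inv]
    exact exp_le_exp.mpr (by linarith [le_abs_self (log R)])
  refine ⟨fun x hx => (hs n).g_eq_of_le x (hR'.trans hx),
    fun x _ hx => (hs n).h_eq_of_le x (by rwa [exp_neg, exp_log hρ]), (hs n).disjoint,
    fun x hx => (hs n).h_eq_zero_of_le x (by rwa [← exp_neg, neg_sub, sub_eq_neg_add] at hx),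
    Real.sqrt_le_iff.mpr ⟨hε.le, (hrr n).trans ?_⟩⟩
  exact (mul_le_mul_of_nonneg_left (Real.sqrt_le_iff.mp (hC _)).2 (by positivity)).trans hsmall

/-- Decoupling decomposition near the origin. -/
theorem decoupling_decomposition_near (R : ℝ) (hR : 0 < R)
    (Rk : ℕ → ℝ) (hRkpos : ∀ k, 0 < Rk k) (hRk : Tendsto Rk atTop atTop)
    (ε : ℝ) (hε : 0 < ε)
    (f : ℕ → ℝ → ℝ) (hf : ∀ k, H1rad (f k))
    (hbdd : ∃ C : ℝ, ∀ k, H1norm (f k) ≤ C) :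
    ∃ k : ℕ → ℕ, StrictMono k ∧
    ∃ g h rr : ℕ → ℝ → ℝ, ∃ Rt : ℕ → ℝ,
      Tendsto Rt atTop atTop ∧
      (∀ n, H1rad (g n) ∧ H1rad (h n) ∧ H1rad (rr n)) ∧
      (∀ n, ∀ x, f (k n) x = g n x + h n x + rr n x) ∧
      (∀ᶠ n in atTop,
        (∀ x : ℝ, R⁻¹ ≤ x → g n x = f (k n) x) ∧
        (∀ x : ℝ, 0 < x → x ≤ (Rk (k n))⁻¹ → h n x = f (k n) x) ∧
        (∀ x : ℝ, g n x = 0 ∨ h n x = 0) ∧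
        (∀ x : ℝ, (Rt n)⁻¹ ≤ x → h n x = 0) ∧
        H1norm (rr n) ≤ ε) :=
  decoupling_decomposition_near_general R hR Rk hRk ε hε f hf hbdd
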